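/- (Lee–Yang) Let N be a positive integer, let J_{ij} ≥ 0 for 1 ≤ i, j ≤ N, and let λ_1, …, λ_N ≥ 0. Then the entire function of the complex variable t given by t ↦ ∑_{x ∈ {−1,1}^N} exp(∑_{i,j=1}^N J_{ij} x_i x_j) · exp(i t ∑_{i=1}^N λ_i x_i) has only real zeros. -/

import Mathlib

open MeasureTheory

set_option linter.unusedSectionVars false
set_option linter.unusedVariables false
set_option maxHeartbeats 1000000


open Finset
set_option linter.unusedSectionVars false

namespace LeeYangAux

variable {ι : Type} [DecidableEq ι] [Fintype ι]

/-- crossing weight -/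
def W (a : ι → ι → ℝ) (σ : ι → Bool) : ℝ :=
  ∏ i, ∏ j, (if σ i ≠ σ j then a i j else 1)

noncomputable def Zf (z : ι → ℂ) (σ : ι → Bool) : ℂ :=
  ∏ i, (if σ i = true then z i else 1)

noncomputable def AF (a : ι → ι → ℝ) (z : ι → ℂ) : ℂ :=
  ∑ σ : ι → Bool, (W a σ : ℂ) * Zf z σ

noncomputable def BF (a : ι → ι → ℝ) (p : ι) (z : ι → ℂ) : ℂ :=
  ∑ σ : ι → Bool, if σ p = true then 0 else (W a σ : ℂ) * Zf z σ

noncomputable def CF (a : ι → ι → ℝ) (p : ι) (z : ι → ℂ) : ℂ :=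
  ∑ σ : ι → Bool, if σ p = true
    then (W a σ : ℂ) * ∏ i, (if σ i = true ∧ i ≠ p then z i else 1) else 0

lemma W_pos {a : ι → ι → ℝ} (ha : ∀ i j, 0 < a i j) (σ : ι → Bool) : 0 < W a σ := by
  apply Finset.prod_pos; intro i _; apply Finset.prod_pos; intro j _
  by_cases h : σ i ≠ σ j <;> simp [h]
  · exact ha i j

lemma W_not (a : ι → ι → ℝ) (σ : ι → Bool) : W a (fun i => !σ i) = W a σ := by
  unfold W
  refine Finset.prod_congr rfl fun i _ => Finset.prod_congr rfl fun j _ => ?_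
  congr 1
  simp only [ne_eq, eq_iff_iff]
  cases hσi : σ i <;> cases hσj : σ j <;> simp

/-- key affine splitting -/
lemma AF_update (a : ι → ι → ℝ) (k : ι) (z : ι → ℂ) (ζ : ℂ) :
    AF a (Function.update z k ζ) = BF a k z + ζ * CF a k z := by
  unfold AF BF CF
  rw [Finset.mul_sum, ← Finset.sum_add_distrib]
  refine Finset.sum_congr rfl fun σ _ => ?_
  by_cases h : σ k = true
  · have hz : Zf (Function.update z k ζ) σ
        = ζ * ∏ i, (if σ i = true ∧ i ≠ k then z i else 1) := by
      unfold Zf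
      rw [← Finset.mul_prod_erase Finset.univ _ (Finset.mem_univ k),
          ← Finset.mul_prod_erase Finset.univ
            (fun i => if σ i = true ∧ i ≠ k then z i else 1) (Finset.mem_univ k)]
      simp only [h, if_true, Function.update_self, ne_eq, not_true_eq_false, and_false, if_false]
      rw [one_mul]
      congr 1
      refine Finset.prod_congr rfl fun i hi => ?_
      have hik : i ≠ k := Finset.ne_of_mem_erase hi
      rw [Function.update_of_ne hik]
      simp [hik]
    rw [hz]
    simp only [h, if_true]
    ring
  · have hz : Zf (Function.update z k ζ) σ = Zf z σ := by
      unfold Zf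
      refine Finset.prod_congr rfl fun i _ => ?_
      by_cases hik : i = k
      · subst hik; simp [h]
      · rw [Function.update_of_ne hik]
    rw [hz]
    simp only [h, if_false, Bool.false_eq_true]
    ring

lemma BF_eq (a : ι → ι → ℝ) (p : ι) (z : ι → ℂ) :
    BF a p z = AF a (Function.update z p 0) := by
  rw [AF_update]; ring

lemma CF_eq (a : ι → ι → ℝ) (p : ι) (z : ι → ℂ) :
    CF a p z = AF a (Function.update z p 1) - AF a (Function.update z p 0) := by
  rw [AF_update, AF_update]; ring

lemma AF_split (a : ι → ι → ℝ) (p : ι) (z : ι → ℂ) :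
    AF a z = BF a p z + z p * CF a p z := by
  have := AF_update a p z (z p)
  rwa [Function.update_eq_self] at this

lemma BF_update_self (a : ι → ι → ℝ) (p : ι) (z : ι → ℂ) (ζ : ℂ) :
    BF a p (Function.update z p ζ) = BF a p z := by
  rw [BF_eq, BF_eq, Function.update_idem]

lemma CF_update_self (a : ι → ι → ℝ) (p : ι) (z : ι → ℂ) (ζ : ℂ) :
    CF a p (Function.update z p ζ) = CF a p z := by
  rw [CF_eq, CF_eq, Function.update_idem, Function.update_idem]

end LeeYangAux


namespace LeeYangAux2
open LeeYangAux
variable {ι : Type} [DecidableEq ι] [Fintype ι]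

noncomputable def notPerm (ι : Type) : Equiv.Perm (ι → Bool) :=
  Function.Involutive.toPerm (fun σ => fun i => !σ i)
    (fun σ => by funext i; simp)

lemma CF_reflect (a : ι → ι → ℝ) (p : ι) (z : ι → ℂ)
    (hz : ∀ i, i ≠ p → ‖z i‖ = 1) :
    ‖CF a p z‖ = ‖BF a p z‖ := by
  have zconj : ∀ i, i ≠ p → z i * (starRingEnd ℂ) (z i) = 1 := by
    intro i hip
    rw [Complex.mul_conj]
    norm_cast
    rw [Complex.normSq_eq_norm_sq, hz i hip]
    norm_num
  have key : CF a p z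
      = (∏ i ∈ Finset.univ.erase p, z i) * (starRingEnd ℂ) (BF a p z) := by
    unfold CF BF
    rw [map_sum, Finset.mul_sum]
    refine Fintype.sum_equiv (notPerm ι) _ _ fun σ => ?_
    have hnot : ∀ τ : ι → Bool, ∀ i, (notPerm ι τ) i = !τ i := fun τ i => rfl
    by_cases h : σ p = true
    · rw [if_pos h, if_neg (by simp [hnot, h])]
      rw [map_mul, Complex.conj_ofReal]
      have hW : W a (notPerm ι σ) = W a σ := W_not a σ
      rw [hW]
      have hconjZ : (starRingEnd ℂ) (Zf z (notPerm ι σ))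
          = ∏ i, (if σ i = true then 1 else (starRingEnd ℂ) (z i)) := by
        unfold Zf
        rw [map_prod]
        refine Finset.prod_congr rfl fun i _ => ?_
        rw [apply_ite (starRingEnd ℂ), map_one, hnot]
        cases hσ : σ i <;> simp
      rw [hconjZ]
      have hprod : (∏ i, (if σ i = true ∧ i ≠ p then z i else 1))
          = (∏ i ∈ Finset.univ.erase p, z i)
            * ∏ i, (if σ i = true then 1 else (starRingEnd ℂ) (z i)) := by
        rw [← Finset.mul_prod_erase Finset.univ
            (fun i => if σ i = true then 1 else (starRingEnd ℂ) (z i)) (Finset.mem_univ p),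
            ← Finset.mul_prod_erase Finset.univ
            (fun i => if σ i = true ∧ i ≠ p then z i else 1) (Finset.mem_univ p)]
        rw [if_pos h, if_neg (by simp [h]), one_mul, one_mul, ← Finset.prod_mul_distrib]
        refine Finset.prod_congr rfl fun i hi => ?_
        have hip : i ≠ p := Finset.ne_of_mem_erase hi
        by_cases hσ : σ i = true
        · simp [hσ, hip]
        · rw [if_neg (by simp [hσ]), if_neg hσ, zconj i hip]
      rw [hprod]
      ring
    · rw [if_neg h, if_pos (by rw [hnot]; simpa using h)]
      rw [map_zero, mul_zero]
  rw [key]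
  rw [norm_mul, norm_prod, RCLike.norm_conj]
  have : ∀ i ∈ Finset.univ.erase p, ‖z i‖ = 1 := fun i hi =>
    hz i (Finset.ne_of_mem_erase hi)
  rw [Finset.prod_congr rfl this, Finset.prod_const_one, one_mul]

end LeeYangAux2

namespace LeeYangAux3
open LeeYangAux
variable {ι : Type} [DecidableEq ι] [Fintype ι]

lemma erase_subtype_prod {M : Type} [CommMonoid M] (p : ι) (f : ι → M) :
    ∏ i ∈ Finset.univ.erase p, f i = ∏ i : {j : ι // j ≠ p}, f i :=
  Finset.prod_subtype (Finset.univ.erase p) (fun x => by simp) f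

lemma BF_restrict (a : ι → ι → ℝ) (p : ι) (z : ι → ℂ) :
    BF a p z = AF (fun i j : {j : ι // j ≠ p} => a i j)
      (fun i : {j : ι // j ≠ p} => ((a i p * a p i : ℝ) : ℂ) * z i) := by
  classical
  set ι' := {j : ι // j ≠ p}
  set E := (Equiv.funSplitAt p Bool).symm with hE
  unfold BF AF
  rw [← Fintype.sum_equiv E
      (fun x : Bool × (ι' → Bool) =>
        if (E x) p = true then 0 else (W a (E x) : ℂ) * Zf z (E x))
      (fun σ : ι → Bool => if σ p = true then 0 else (W a σ : ℂ) * Zf z σ)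
      (fun x => rfl)]
  rw [Fintype.sum_prod_type]
  rw [Fintype.sum_bool]
  have hEp : ∀ b (τ : ι' → Bool), (E (b, τ)) p = b := by
    intro b τ; simp [hE]
  have hEne : ∀ b (τ : ι' → Bool) (i : ι) (h : i ≠ p), (E (b, τ)) i = τ ⟨i, h⟩ := by
    intro b τ i h; simp [hE, h]
  have hzero : (∑ τ : ι' → Bool,
      if (E (true, τ)) p = true then 0 else (W a (E (true, τ)) : ℂ) * Zf z (E (true, τ))) = 0 := by
    refine Finset.sum_eq_zero fun τ _ => ?_
    rw [if_pos (hEp true τ)]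
  rw [hzero, zero_add]
  refine Finset.sum_congr rfl fun τ _ => ?_
  set σ := E (false, τ) with hσ
  have hp : σ p = false := hEp false τ
  have hσi : ∀ i : {j : ι // j ≠ p}, σ (i : ι) = τ i := by
    intro i
    rw [hσ, hEne false τ i i.2]
  rw [if_neg (by simp [hp])]
  -- now the per-τ identity
  have hZf : Zf z σ = ∏ i : ι', (if τ i = true then z i else 1) := by
    unfold Zf
    rw [← Finset.mul_prod_erase Finset.univ _ (Finset.mem_univ p), if_neg (by simp [hp]),
        one_mul, erase_subtype_prod]
    refine Finset.prod_congr rfl fun i _ => ?_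
    rw [hσi i]
  have hW : W a σ = (W (fun i j : ι' => a i j) τ)
      * ∏ i : ι', (if τ i = true then a i p * a p i else 1) := by
    unfold W
    rw [← Finset.mul_prod_erase Finset.univ _ (Finset.mem_univ p), erase_subtype_prod]
    have hrowp : (∏ j, if σ p ≠ σ j then a p j else 1)
        = ∏ j : ι', (if τ j = true then a p j else 1) := by
      rw [← Finset.mul_prod_erase Finset.univ _ (Finset.mem_univ p),
          if_neg (by simp), one_mul, erase_subtype_prod]
      refine Finset.prod_congr rfl fun j _ => ?_
      rw [hp, hσi j]
      cases hj : τ j <;> simp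
    have hrowi : ∀ i : ι', (∏ j, if σ (i : ι) ≠ σ j then a i j else 1)
        = (if τ i = true then a i p else 1)
          * ∏ j : ι', (if τ i ≠ τ j then a i j else 1) := by
      intro i
      rw [← Finset.mul_prod_erase Finset.univ _ (Finset.mem_univ p), erase_subtype_prod]
      congr 1
      · rw [hp, hσi i]
        cases hi : τ i <;> simp
      · refine Finset.prod_congr rfl fun j _ => ?_
        rw [hσi i, hσi j]
    rw [hrowp]
    rw [Finset.prod_congr rfl fun i _ => hrowi i]
    rw [Finset.prod_mul_distrib]
    beta_reduce
    have hmerge : (∏ j : {j : ι // j ≠ p}, if τ j = true then a p j else 1)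
        * (∏ x : {j : ι // j ≠ p}, if τ x = true then a x p else 1)
        = ∏ i : {j : ι // j ≠ p}, if τ i = true then a i p * a p i else 1 := by
      rw [← Finset.prod_mul_distrib]
      refine Finset.prod_congr rfl fun i _ => ?_
      cases hi : τ i <;> simp [mul_comm]
    rw [← mul_assoc, hmerge, mul_comm]
  rw [hZf, hW]
  push_cast [apply_ite (fun r : ℝ => (r : ℂ))]
  rw [mul_assoc]
  congr 1
  unfold Zf
  rw [← Finset.prod_mul_distrib]
  refine Finset.prod_congr rfl fun i _ => ?_
  cases hi : τ i <;> simp [mul_assoc]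

end LeeYangAux3

namespace LeeYangAux4
open LeeYangAux

/-- Maximum modulus principle for ratios of affine functions on the closed unit disk. -/
lemma moebius_bound (α β γ δ : ℂ)
    (hden : ∀ w : ℂ, ‖w‖ ≤ 1 → γ + δ * w ≠ 0)
    (hbd : ∀ w : ℂ, ‖w‖ = 1 → ‖α + β * w‖ ≤ ‖γ + δ * w‖) :
    ∀ w : ℂ, ‖w‖ ≤ 1 → ‖α + β * w‖ ≤ ‖γ + δ * w‖ := by
  intro w hw
  set f : ℂ → ℂ := fun ζ => (α + β * ζ) / (γ + δ * ζ) with hf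
  have hcl : closure (Metric.ball (0:ℂ) 1) = Metric.closedBall 0 1 :=
    closure_ball 0 one_ne_zero
  have hfr : frontier (Metric.ball (0:ℂ) 1) = Metric.sphere 0 1 :=
    frontier_ball 0 one_ne_zero
  have hmem : ∀ x : ℂ, x ∈ Metric.closedBall (0:ℂ) 1 → ‖x‖ ≤ 1 := by
    intro x hx; simpa [Metric.mem_closedBall, dist_zero_right] using hx
  have hdiff : DifferentiableOn ℂ f (Metric.closedBall 0 1) := by
    apply DifferentiableOn.div
    · exact (Differentiable.differentiableOn (by fun_prop))
    · exact (Differentiable.differentiableOn (by fun_prop))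
    · intro x hx; exact hden x (hmem x hx)
  have hdc : DiffContOnCl ℂ f (Metric.ball 0 1) := by
    apply DifferentiableOn.diffContOnCl
    rw [hcl]; exact hdiff
  have key : ‖f w‖ ≤ 1 := by
    apply Complex.norm_le_of_forall_mem_frontier_norm_le Metric.isBounded_ball hdc
    · intro ζ hζ
      rw [hfr, mem_sphere_zero_iff_norm] at hζ
      have hd0 : γ + δ * ζ ≠ 0 := hden ζ (le_of_eq hζ)
      rw [hf]
      simp only []
      rw [norm_div, div_le_one (norm_pos_iff.mpr hd0)]
      exact hbd ζ hζ
    · rw [hcl]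
      simpa [Metric.mem_closedBall, dist_zero_right] using hw
  have hdw : γ + δ * w ≠ 0 := hden w hw
  have : ‖α + β * w‖ = ‖f w‖ * ‖γ + δ * w‖ := by
    rw [hf]; simp only []
    rw [norm_div, div_mul_cancel₀]
    exact norm_ne_zero_iff.mpr hdw
  rw [this]
  calc ‖f w‖ * ‖γ + δ * w‖ ≤ 1 * ‖γ + δ * w‖ := by
        apply mul_le_mul_of_nonneg_right key (norm_nonneg _)
    _ = ‖γ + δ * w‖ := one_mul _

end LeeYangAux4

namespace LeeYangAux5
open LeeYangAux LeeYangAux2 LeeYangAux3 LeeYangAux4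

theorem master (n : ℕ) :
    ∀ (ι : Type) (_ : DecidableEq ι) (_ : Fintype ι), Fintype.card ι = n →
      ∀ a : ι → ι → ℝ, (∀ i j, 0 < a i j ∧ a i j ≤ 1) →
        ((∀ z : ι → ℂ,
            (∀ i, ‖z i‖ < 1 ∨ ∃ r : ℝ, 0 < r ∧ r ≤ 1 ∧ z i = (r : ℂ)) →
            AF a z ≠ 0) ∧
         (∀ (p : ι) (z : ι → ℂ), (∀ i, i ≠ p → ‖z i‖ ≤ 1) →
            ‖CF a p z‖ ≤ ‖BF a p z‖)) := by
  induction n using Nat.strong_induction_on with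
  | _ n IH =>
  intro ι instD instF hcard a ha
  have hsub : ∀ p : ι, Fintype.card {j : ι // j ≠ p} < n := by
    intro p
    have h1 : Fintype.card {j : ι // ¬ j = p} = Fintype.card ι - 1 := by
      rw [Fintype.card_subtype_compl, Fintype.card_subtype_eq]
    have h2 : Fintype.card {j : ι // j ≠ p} = Fintype.card ι - 1 := h1
    have h0 : 0 < Fintype.card ι := Fintype.card_pos_iff.mpr ⟨p⟩
    omega
  -- strict-coupling domination, proved by pulling coordinates to the torus
  have P2s : ∀ b : ι → ι → ℝ, (∀ i j, 0 < b i j ∧ b i j < 1) →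
      ∀ (p : ι) (z : ι → ℂ), (∀ i, i ≠ p → ‖z i‖ ≤ 1) →
      ‖CF b p z‖ ≤ ‖BF b p z‖ := by
    intro b hb p
    have hBne : ∀ z : ι → ℂ, (∀ i, i ≠ p → ‖z i‖ ≤ 1) → BF b p z ≠ 0 := by
      intro z hz
      rw [BF_restrict]
      refine ((IH _ (hsub p) _ _ _ rfl _
        (fun i j => ⟨(hb i j).1, (hb i j).2.le⟩)).1 _ ?_)
      intro i
      left
      have h1 : ‖z (i : ι)‖ ≤ 1 := hz i i.2
      have hbb : 0 < b i p * b p i := mul_pos (hb i p).1 (hb p i).1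
      have hbb1 : b (i : ι) p * b p i < 1 := by
        nlinarith [(hb (i : ι) p).1, (hb (i : ι) p).2, (hb p (i : ι)).1, (hb p (i : ι)).2]
      calc ‖((b i p * b p i : ℝ) : ℂ) * z i‖
          = (b i p * b p i) * ‖z i‖ := by
            rw [norm_mul, Complex.norm_real, Real.norm_eq_abs, abs_of_pos hbb]
        _ ≤ (b i p * b p i) * 1 := by
            exact mul_le_mul_of_nonneg_left h1 hbb.le
        _ < 1 := by rw [mul_one]; exact hbb1
    have Qaux : ∀ s : Finset ι, ∀ z : ι → ℂ, (∀ i, i ≠ p → ‖z i‖ ≤ 1) →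
        (∀ i, i ∉ s → i ≠ p → ‖z i‖ = 1) → ‖CF b p z‖ ≤ ‖BF b p z‖ := by
      intro s
      induction s using Finset.induction_on with
      | empty =>
        intro z hz hpin
        exact le_of_eq (CF_reflect b p z (fun i hip => hpin i (Finset.notMem_empty i) hip))
      | @insert k s hk IH2 =>
        intro z hz hpin
        by_cases hkp : k = p
        · refine IH2 z hz fun i his hip => hpin i ?_ hip
          intro hmem
          rcases Finset.mem_insert.mp hmem with h | h
          · exact hip (h.trans hkp)
          · exact his h
        · -- Möbius step in coordinate k
          have hupdB : ∀ ζ : ℂ, BF b p (Function.update z k ζ)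
              = BF b k (Function.update z p 0) + CF b k (Function.update z p 0) * ζ := by
            intro ζ
            rw [BF_eq, Function.update_comm hkp, AF_update]
            ring
          have hupdC : ∀ ζ : ℂ, CF b p (Function.update z k ζ)
              = (BF b k (Function.update z p 1) - BF b k (Function.update z p 0))
                + (CF b k (Function.update z p 1) - CF b k (Function.update z p 0)) * ζ := by
            intro ζ
            rw [CF_eq, Function.update_comm hkp, Function.update_comm hkp,
              AF_update, AF_update]
            ring
          have hmb := moebius_bound
            (BF b k (Function.update z p 1) - BF b k (Function.update z p 0))
            (CF b k (Function.update z p 1) - CF b k (Function.update z p 0))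
            (BF b k (Function.update z p 0))
            (CF b k (Function.update z p 0))
            (fun w hw => by
              rw [← hupdB w]
              refine hBne _ fun i hip => ?_
              by_cases hik : i = k
              · subst hik; rw [Function.update_self]; exact hw
              · rw [Function.update_of_ne hik]; exact hz i hip)
            (fun w hw => by
              rw [← hupdB w, ← hupdC w]
              refine IH2 _ (fun i hip => ?_) (fun i his hip => ?_)
              · by_cases hik : i = k
                · subst hik; rw [Function.update_self]; exact le_of_eq hw
                · rw [Function.update_of_ne hik]; exact hz i hip
              · by_cases hik : i = k
                · subst hik; rw [Function.update_self]; exact hw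
                · rw [Function.update_of_ne hik]
                  exact hpin i (fun hmem => his (by
                    rcases Finset.mem_insert.mp hmem with h | h
                    · exact absurd h hik
                    · exact h)) hip)
          have := hmb (z k) (hz k hkp)
          rwa [← hupdB (z k), ← hupdC (z k), Function.update_eq_self] at this
    intro z hz
    exact Qaux Finset.univ z hz (fun i hi _ => absurd (Finset.mem_univ i) hi)
  -- general (non-strict) domination, by a limiting argument in the couplings
  have P2 : ∀ (p : ι) (z : ι → ℂ), (∀ i, i ≠ p → ‖z i‖ ≤ 1) →
      ‖CF a p z‖ ≤ ‖BF a p z‖ := by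
    intro p z hz
    have hev : ∀ t : ℝ, t ∈ Set.Ioo (0:ℝ) 1 →
        ‖CF (fun i j => t * a i j) p z‖ ≤ ‖BF (fun i j => t * a i j) p z‖ := by
      intro t ht
      refine P2s _ (fun i j => ⟨mul_pos ht.1 (ha i j).1, ?_⟩) p z hz
      calc t * a i j ≤ t * 1 := mul_le_mul_of_nonneg_left (ha i j).2 ht.1.le
        _ = t := mul_one t
        _ < 1 := ht.2
    have hcontW : ∀ σ : ι → Bool, Continuous fun t : ℝ => W (fun i j => t * a i j) σ := by
      intro σ
      unfold W
      refine continuous_finset_prod _ fun i _ => continuous_finset_prod _ fun j _ => ?_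
      by_cases h : σ i ≠ σ j
      · simpa [h] using (continuous_mul_const (a i j))
      · simpa [h] using continuous_const
    have hcontB : Continuous fun t : ℝ => BF (fun i j => t * a i j) p z := by
      unfold BF
      refine continuous_finset_sum _ fun σ _ => ?_
      by_cases h : σ p = true
      · simpa [h] using continuous_const
      · simp only [h, if_false, Bool.false_eq_true]
        exact (Complex.continuous_ofReal.comp (hcontW σ)).mul continuous_const
    have hcontC : Continuous fun t : ℝ => CF (fun i j => t * a i j) p z := by
      unfold CF
      refine continuous_finset_sum _ fun σ _ => ?_
      by_cases h : σ p = true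
      · simp only [h, if_true]
        exact (Complex.continuous_ofReal.comp (hcontW σ)).mul continuous_const
      · simpa [h] using continuous_const
    have hone : ∀ (F : (ι → ι → ℝ) → ℂ), F (fun i j => (1:ℝ) * a i j) = F a := by
      intro F; congr 1; funext i j; rw [one_mul]
    have htB : Filter.Tendsto (fun t : ℝ => ‖BF (fun i j => t * a i j) p z‖)
        (nhdsWithin 1 (Set.Iio 1)) (nhds ‖BF a p z‖) := by
      have h1 := (hcontB.norm.tendsto 1).mono_left
        (nhdsWithin_le_nhds (s := Set.Iio (1:ℝ)))
      simpa [one_mul] using h1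
    have htC : Filter.Tendsto (fun t : ℝ => ‖CF (fun i j => t * a i j) p z‖)
        (nhdsWithin 1 (Set.Iio 1)) (nhds ‖CF a p z‖) := by
      have h1 := (hcontC.norm.tendsto 1).mono_left
        (nhdsWithin_le_nhds (s := Set.Iio (1:ℝ)))
      simpa [one_mul] using h1
    have hmem : Set.Ioo (0:ℝ) 1 ∈ nhdsWithin (1:ℝ) (Set.Iio 1) :=
      Ioo_mem_nhdsLT_of_mem (by constructor <;> norm_num)
    exact le_of_tendsto_of_tendsto htC htB (Filter.eventually_of_mem hmem hev)
  -- nonvanishing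
  have P1 : ∀ z : ι → ℂ,
      (∀ i, ‖z i‖ < 1 ∨ ∃ r : ℝ, 0 < r ∧ r ≤ 1 ∧ z i = (r : ℂ)) →
      AF a z ≠ 0 := by
    intro z hz
    by_cases hex : ∃ p : ι, ‖z p‖ < 1
    · obtain ⟨p, hp⟩ := hex
      intro h0
      have hsplit := AF_split a p z
      have hle : ‖CF a p z‖ ≤ ‖BF a p z‖ := by
        refine P2 p z fun i _ => ?_
        rcases hz i with h | ⟨r, hr0, hr1, hre⟩
        · exact h.le
        · rw [hre, Complex.norm_real, Real.norm_eq_abs, abs_of_pos hr0]; exact hr1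
      have hBne : BF a p z ≠ 0 := by
        rw [BF_restrict]
        refine ((IH _ (hsub p) _ _ _ rfl _
          (fun i j => ⟨(ha i j).1, (ha i j).2⟩)).1 _ ?_)
        intro i
        have haa0 : 0 < a (i : ι) p * a p i := mul_pos (ha i p).1 (ha p i).1
        have haa1 : a (i : ι) p * a p i ≤ 1 := by
          nlinarith [(ha (i : ι) p).1, (ha (i : ι) p).2, (ha p (i : ι)).1, (ha p (i : ι)).2]
        rcases hz (i : ι) with h | ⟨r, hr0, hr1, hre⟩
        · left
          calc ‖((a i p * a p i : ℝ) : ℂ) * z i‖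
              = (a i p * a p i) * ‖z i‖ := by
                rw [norm_mul, Complex.norm_real, Real.norm_eq_abs, abs_of_pos haa0]
            _ ≤ 1 * ‖z i‖ := mul_le_mul_of_nonneg_right haa1 (norm_nonneg _)
            _ < 1 := by rw [one_mul]; exact h
        · right
          refine ⟨(a i p * a p i) * r, mul_pos haa0 hr0, ?_, ?_⟩
          · nlinarith
          · rw [hre]; push_cast; ring
      have he : BF a p z = - (z p * CF a p z) := by
        rw [hsplit] at h0; linear_combination h0
      have : ‖BF a p z‖ < ‖BF a p z‖ := by
        calc ‖BF a p z‖ = ‖z p‖ * ‖CF a p z‖ := by rw [he, norm_neg, norm_mul]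
          _ ≤ ‖z p‖ * ‖BF a p z‖ :=
              mul_le_mul_of_nonneg_left hle (norm_nonneg _)
          _ < 1 * ‖BF a p z‖ :=
              mul_lt_mul_of_pos_right hp (norm_pos_iff.mpr hBne)
          _ = ‖BF a p z‖ := one_mul _
      exact lt_irrefl _ this
    · push_neg at hex
      have hr : ∀ i, ∃ r : ℝ, 0 < r ∧ r ≤ 1 ∧ z i = (r : ℂ) := by
        intro i
        rcases hz i with h | h
        · exact absurd h (not_lt.mpr (hex i))
        · exact h
      choose r hr0 hr1 hre using hr
      have hAF : AF a z
          = ((∑ σ : ι → Bool, W a σ * ∏ i, (if σ i = true then r i else 1) : ℝ) : ℂ) := by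
        unfold AF Zf
        push_cast
        refine Finset.sum_congr rfl fun σ _ => ?_
        congr 1
        refine Finset.prod_congr rfl fun i _ => ?_
        rw [hre i, apply_ite (fun x : ℝ => (x : ℂ)), Complex.ofReal_one]
      rw [hAF]
      rw [Complex.ofReal_ne_zero]
      have hpos : 0 < ∑ σ : ι → Bool, W a σ * ∏ i, (if σ i = true then r i else 1) := by
        refine Finset.sum_pos (fun σ _ => ?_) ⟨fun _ => true, Finset.mem_univ _⟩
        refine mul_pos (W_pos (fun i j => (ha i j).1) σ) ?_
        refine Finset.prod_pos fun i _ => ?_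
        by_cases h : σ i = true <;> simp [h]
        exact hr0 i
      exact ne_of_gt hpos
  exact ⟨P1, P2⟩

end LeeYangAux5

/-- (Lee–Yang) For a ferromagnetic Ising model with couplings `J i j ≥ 0` and field
strengths `λ i ≥ 0`, the partition function
`t ↦ ∑_{x ∈ {−1,1}^N} exp(∑_{i,j} J_{ij} x_i x_j) exp(i t ∑_i λ_i x_i)`
has only real zeros. -/
theorem lee_yang_circle_theorem (N : ℕ) (hN : 0 < N)
    (J : Fin N → Fin N → ℝ) (hJ : ∀ i j, 0 ≤ J i j)
    (lam : Fin N → ℝ) (hlam : ∀ i, 0 ≤ lam i) :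
    ∀ t : ℂ,
      (∑ σ : Fin N → Bool,
        (Real.exp (∑ i, ∑ j,
            J i j * (if σ i then 1 else -1) * (if σ j then 1 else -1)) : ℂ) *
          Complex.exp (Complex.I * t *
            ((∑ i, lam i * (if σ i then 1 else -1) : ℝ) : ℂ))) = 0 →
      t.im = 0 := by
  classical
  set S : ℂ → ℂ := fun t => ∑ σ : Fin N → Bool,
      (Real.exp (∑ i, ∑ j,
          J i j * (if σ i then 1 else -1) * (if σ j then 1 else -1)) : ℂ) *
        Complex.exp (Complex.I * t *
          ((∑ i, lam i * (if σ i then 1 else -1) : ℝ) : ℂ)) with hS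
  set a : Fin N → Fin N → ℝ := fun i j => Real.exp (-(2 * J i j)) with ha_def
  have ha : ∀ i j, 0 < a i j ∧ a i j ≤ 1 := by
    intro i j
    exact ⟨Real.exp_pos _, Real.exp_le_one_iff.mpr (by nlinarith [hJ i j])⟩
  set zf : ℂ → Fin N → ℂ := fun t i => Complex.exp (Complex.I * t * ((2 * lam i : ℝ) : ℂ))
    with hzf
  -- factorization of the partition function
  have hfac : ∀ t : ℂ, S t = (Real.exp (∑ i, ∑ j, J i j) : ℂ)
      * Complex.exp (Complex.I * t * ((-(∑ i, lam i) : ℝ) : ℂ))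
      * LeeYangAux.AF a (zf t) := by
    intro t
    rw [hS]
    unfold LeeYangAux.AF
    rw [Finset.mul_sum]
    refine Finset.sum_congr rfl fun σ _ => ?_
    have h1 : (∑ i, ∑ j, J i j * (if σ i then 1 else -1) * (if σ j then 1 else -1))
        = (∑ i, ∑ j, J i j) + ∑ i, ∑ j, (if σ i ≠ σ j then -(2 * J i j) else 0) := by
      rw [← Finset.sum_add_distrib]
      refine Finset.sum_congr rfl fun i _ => ?_
      rw [← Finset.sum_add_distrib]
      refine Finset.sum_congr rfl fun j _ => ?_
      cases hσi : σ i <;> cases hσj : σ j <;> simp [hσi, hσj] <;> ring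
    have h2 : Real.exp (∑ i, ∑ j, (if σ i ≠ σ j then -(2 * J i j) else 0)) = LeeYangAux.W a σ := by
      rw [Real.exp_sum]
      unfold LeeYangAux.W
      refine Finset.prod_congr rfl fun i _ => ?_
      rw [Real.exp_sum]
      refine Finset.prod_congr rfl fun j _ => ?_
      rw [apply_ite Real.exp, Real.exp_zero]
    have h3 : (∑ i, lam i * (if σ i then 1 else -1))
        = (-(∑ i, lam i)) + ∑ i, (if σ i = true then 2 * lam i else 0) := by
      rw [← Finset.sum_neg_distrib, ← Finset.sum_add_distrib]
      refine Finset.sum_congr rfl fun i _ => ?_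
      cases hσi : σ i <;> simp [hσi] <;> ring
    have h4 : Complex.exp (Complex.I * t * ((∑ i, lam i * (if σ i then 1 else -1) : ℝ) : ℂ))
        = Complex.exp (Complex.I * t * ((-(∑ i, lam i) : ℝ) : ℂ)) * LeeYangAux.Zf (zf t) σ := by
      rw [h3, Complex.ofReal_add, mul_add, Complex.exp_add]
      congr 1
      rw [Complex.ofReal_sum, Finset.mul_sum, Complex.exp_sum]
      unfold LeeYangAux.Zf
      refine Finset.prod_congr rfl fun i _ => ?_
      cases hσi : σ i <;> simp [hσi, hzf]
    rw [h1, Real.exp_add, Complex.ofReal_mul, h2, h4]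
    ring
  -- evenness of the partition function
  have heven : ∀ t : ℂ, S t = S (-t) := by
    intro t
    rw [hS]
    refine Fintype.sum_equiv (LeeYangAux2.notPerm (Fin N)) _ _ fun σ => ?_
    have hnot : ∀ i, ((LeeYangAux2.notPerm (Fin N)) σ) i = !σ i := fun i => rfl
    have e1 : (∑ i, ∑ j, J i j * (if σ i then 1 else -1) * (if σ j then 1 else -1))
        = (∑ i, ∑ j, J i j * (if (LeeYangAux2.notPerm (Fin N)) σ i then 1 else -1)
            * (if (LeeYangAux2.notPerm (Fin N)) σ j then 1 else -1)) := by
      refine Finset.sum_congr rfl fun i _ => Finset.sum_congr rfl fun j _ => ?_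
      rw [hnot, hnot]
      cases hσi : σ i <;> cases hσj : σ j <;> simp [hσi, hσj] <;> ring
    have e2 : ((∑ i, lam i * (if (LeeYangAux2.notPerm (Fin N)) σ i then 1 else -1)) : ℝ)
        = -(∑ i, lam i * (if σ i then 1 else -1)) := by
      rw [← Finset.sum_neg_distrib]
      refine Finset.sum_congr rfl fun i _ => ?_
      rw [hnot]
      cases hσi : σ i <;> simp [hσi]
    rw [← e1, e2]
    congr 2
    push_cast
    ring
  -- the main case : positive imaginary part
  have hmain : ∀ t : ℂ, 0 < t.im → S t ≠ 0 := by
    intro t him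
    rw [hfac t]
    refine mul_ne_zero (mul_ne_zero ?_ (Complex.exp_ne_zero _)) ?_
    · exact_mod_cast Real.exp_ne_zero _
    · refine (LeeYangAux5.master (Fintype.card (Fin N)) (Fin N) _ _ rfl a ha).1 (zf t) fun i => ?_
      rcases (hlam i).eq_or_lt with h0 | h0
      · right
        refine ⟨1, one_pos, le_refl 1, ?_⟩
        rw [hzf]
        simp [← h0, Complex.exp_zero]
      · left
        rw [hzf]
        simp only []
        rw [Complex.norm_exp]
        rw [Real.exp_lt_one_iff]
        have hre : (Complex.I * t * ((2 * lam i : ℝ) : ℂ)).re = -(t.im * (2 * lam i)) := by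
          simp [Complex.mul_re, Complex.mul_im]
        rw [hre]
        nlinarith
  -- conclusion
  intro t h0
  by_contra him
  rcases lt_or_gt_of_ne him with hneg | hpos
  · exact hmain (-t) (by simpa using (neg_pos.mpr hneg)) (by rw [← heven t]; exact h0)
  · exact hmain t hpos h0
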